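/- arXiv:1905.10191 — 7 statements merged into one kernel-verified Lean document; each statement's English description precedes it below -/
import Mathlib

section
/- Let M be a non-trivial self-descriptive square of order n. Writing Σr_i for the sum of the entries of row i and Σc_j for the sum of the entries of column j, one has Σr_n = Σc_n and 2·(Σr_1 + Σr_2 + ⋯ + Σr_{n−1}) = 2·(Σc_1 + Σc_2 + ⋯ + Σc_{n−1}) = n² − Σr_n. -/
/-- The frequency of a value `v` in a square matrix `M`: the number of cells `(i,j)`
with `M i j = v`. -/
def freq {n : ℕ} (M : Matrix (Fin (n + 1)) (Fin (n + 1)) ℤ) (v : ℤ) : ℕ :=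
  (Finset.univ.filter fun p : Fin (n + 1) × Fin (n + 1) => M p.1 p.2 = v).card

/-- A square matrix is self-descriptive if every row sum equals the frequency of that
row's rightmost entry, and every column sum equals the frequency of that column's
bottom entry. -/
def IsSD {n : ℕ} (M : Matrix (Fin (n + 1)) (Fin (n + 1)) ℤ) : Prop :=
  (∀ i, ∑ j, M i j = (freq M (M i (Fin.last n)) : ℤ)) ∧
  (∀ j, ∑ i, M i j = (freq M (M (Fin.last n) j) : ℤ))

/-- A cell is in the border if it lies in the last row or the last column. -/
def InBorder {n : ℕ} (p : Fin (n + 1) × Fin (n + 1)) : Prop :=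
  p.1 = Fin.last n ∨ p.2 = Fin.last n

/-- A square is non-trivial if the `2n-1` border entries are pairwise distinct and
every value appearing in the square appears in the border. -/
def NonTrivial {n : ℕ} (M : Matrix (Fin (n + 1)) (Fin (n + 1)) ℤ) : Prop :=
  (∀ p q : Fin (n + 1) × Fin (n + 1), InBorder p → InBorder q →
      M p.1 p.2 = M q.1 q.2 → p = q) ∧
  (∀ i j : Fin (n + 1), ∃ p : Fin (n + 1) × Fin (n + 1), InBorder p ∧ M p.1 p.2 = M i j)

/-- In a non-trivial self-descriptive square of order `n+1`, the bottom-row sum equals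
the right-column sum, and twice the sum of the first `n` row sums (equivalently, of the
first `n` column sums) equals `(n+1)^2` minus the bottom-row sum. -/
theorem stmt0 {n : ℕ} (M : Matrix (Fin (n + 1)) (Fin (n + 1)) ℤ)
    (hsd : IsSD M) (hnt : NonTrivial M) :
    (∑ j, M (Fin.last n) j) = (∑ i, M i (Fin.last n)) ∧
    2 * (∑ i : Fin n, ∑ j, M i.castSucc j) = ((n : ℤ) + 1) ^ 2 - ∑ j, M (Fin.last n) j ∧
    2 * (∑ j : Fin n, ∑ i, M i j.castSucc) = ((n : ℤ) + 1) ^ 2 - ∑ j, M (Fin.last n) j := by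
  classical
  obtain ⟨hrow, hcol⟩ := hsd
  obtain ⟨hinj, hcov⟩ := hnt
  set L := Fin.last n with hL
  have h1 : (∑ j, M L j) = (∑ i, M i L) := by rw [hrow L, hcol L]
  set s : Finset (Fin (n+1) × Fin (n+1)) := Finset.univ.image (fun i => (i, L)) with hs
  set t : Finset (Fin (n+1) × Fin (n+1)) := Finset.univ.image (fun j => (L, j)) with ht
  have hmem : ∀ p : Fin (n+1) × Fin (n+1), p ∈ s ∪ t ↔ InBorder p := by
    intro p
    simp only [hs, ht, Finset.mem_union, Finset.mem_image, Finset.mem_univ, true_and,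
      InBorder, Prod.ext_iff]
    constructor
    · rintro (⟨i, hi1, hi2⟩ | ⟨j, hj1, hj2⟩)
      · right; exact hi2.symm
      · left; exact hj1.symm
    · rintro (h | h)
      · right; exact ⟨p.2, h.symm, rfl⟩
      · left; exact ⟨p.1, rfl, h.symm⟩
  set F : Fin (n+1) × Fin (n+1) → ℤ := fun p => (freq M (M p.1 p.2) : ℤ) with hF
  have hfreq : ∀ v : ℤ, (freq M v : ℤ)
      = ∑ q : Fin (n+1) × Fin (n+1), if M q.1 q.2 = v then (1:ℤ) else 0 := by
    intro v
    rw [freq, Finset.card_filter]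
    push_cast
    rfl
  have hA : ∑ p ∈ s ∪ t, F p = ((n:ℤ)+1)^2 := by
    calc ∑ p ∈ s ∪ t, F p
        = ∑ p ∈ s ∪ t, ∑ q : Fin (n+1) × Fin (n+1),
            if M q.1 q.2 = M p.1 p.2 then (1:ℤ) else 0 := by
          exact Finset.sum_congr rfl fun p _ => hfreq _
      _ = ∑ q : Fin (n+1) × Fin (n+1), ∑ p ∈ s ∪ t,
            if M q.1 q.2 = M p.1 p.2 then (1:ℤ) else 0 := Finset.sum_comm
      _ = ∑ _q : Fin (n+1) × Fin (n+1), (1:ℤ) := by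
          refine Finset.sum_congr rfl fun q _ => ?_
          obtain ⟨p₀, hb, hv⟩ := hcov q.1 q.2
          rw [Finset.sum_eq_single_of_mem p₀ ((hmem p₀).mpr hb)]
          · rw [if_pos hv.symm]
          · intro p hp hne
            rw [if_neg]
            intro hvp
            exact hne (hinj p p₀ ((hmem p).mp hp) hb (hvp.symm.trans hv.symm))
      _ = ((n:ℤ)+1)^2 := by
          simp [Finset.card_univ]
          ring
  have hst : s ∩ t = {(L, L)} := by
    ext p
    simp only [Finset.mem_inter, hs, ht, Finset.mem_image, Finset.mem_univ, true_and,
      Finset.mem_singleton, Prod.ext_iff]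
    constructor
    · rintro ⟨⟨i, hi1, hi2⟩, ⟨j, hj1, hj2⟩⟩
      exact ⟨hj1.symm, hi2.symm⟩
    · rintro ⟨h1', h2'⟩
      exact ⟨⟨p.1, rfl, h2'.symm⟩, ⟨p.2, h1'.symm, rfl⟩⟩
  have hsum_s : ∑ p ∈ s, F p = ∑ i, F (i, L) := by
    rw [hs, Finset.sum_image]
    intro a _ b _ h
    exact (Prod.ext_iff.mp h).1
  have hsum_t : ∑ p ∈ t, F p = ∑ j, F (L, j) := by
    rw [ht, Finset.sum_image]
    intro a _ b _ h
    exact (Prod.ext_iff.mp h).2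
  have hie : ∑ p ∈ s ∪ t, F p + ∑ p ∈ s ∩ t, F p = ∑ p ∈ s, F p + ∑ p ∈ t, F p :=
    Finset.sum_union_inter
  rw [hst, Finset.sum_singleton, hA, hsum_s, hsum_t] at hie
  have hFs : ∑ i, F (i, L) = ∑ i, ∑ j, M i j := by
    exact Finset.sum_congr rfl fun i _ => (hrow i).symm
  have hFt : ∑ j, F (L, j) = ∑ j, ∑ i, M i j := by
    exact Finset.sum_congr rfl fun j _ => (hcol j).symm
  have hFL : F (L, L) = ∑ j, M L j := (hrow L).symm
  rw [hFs, hFt, hFL] at hie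
  have hcomm : ∑ j, ∑ i, M i j = ∑ i, ∑ j, M i j := Finset.sum_comm
  have hT : ∑ i, ∑ j, M i j = ∑ i : Fin n, ∑ j, M i.castSucc j + ∑ j, M L j :=
    Fin.sum_univ_castSucc _
  have hT' : ∑ j, ∑ i, M i j = ∑ j : Fin n, ∑ i, M i j.castSucc + ∑ i, M i L :=
    Fin.sum_univ_castSucc _
  refine ⟨h1, ?_, ?_⟩ <;> linarith
end

section
/- Let M be a non-trivial self-descriptive square of order n. Then the sum Σr_n of the entries of the bottom row (which equals the sum Σc_n of the entries of the rightmost column) has the same parity as n; that is, Σr_n ≡ n (mod 2). -/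
open Finset Function

section

variable {n : ℕ}

def lastColValues (M : Matrix (Fin (n + 1)) (Fin (n + 1)) ℤ) : Finset ℤ :=
  univ.image fun i => M i (Fin.last n)

def lastRowValues (M : Matrix (Fin (n + 1)) (Fin (n + 1)) ℤ) : Finset ℤ :=
  univ.image fun j => M (Fin.last n) j

def cellsValuedIn (M : Matrix (Fin (n + 1)) (Fin (n + 1)) ℤ) (T : Finset ℤ) :
    Finset (Fin (n + 1) × Fin (n + 1)) :=
  univ.filter fun p => M p.1 p.2 ∈ T

theorem sum_freq_eq_card_cellsValuedIn {ι : Type*} [Fintype ι]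
    (M : Matrix (Fin (n + 1)) (Fin (n + 1)) ℤ) {v : ι → ℤ} (hv : Injective v) :
    ∑ i, freq M (v i) = #(cellsValuedIn M (univ.image v)) := by
  rw [card_eq_sum_card_fiberwise (s := cellsValuedIn M (univ.image v)) (t := univ.image v)
    (fun p hp => (mem_filter.mp hp).2), sum_image (fun i _ j _ h => hv h)]
  refine sum_congr rfl fun i _ => congrArg card ?_
  ext p
  simp only [cellsValuedIn, mem_filter, mem_univ, true_and]
  exact (and_iff_right_of_imp fun h => h ▸ mem_image_of_mem v (mem_univ i)).symm

variable {M : Matrix (Fin (n + 1)) (Fin (n + 1)) ℤ}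

namespace NonTrivial

theorem injective_lastCol (h : NonTrivial M) : Injective fun i => M i (Fin.last n) :=
  fun i i' hii' => congrArg Prod.fst (h.1 (i, _) (i', _) (Or.inr rfl) (Or.inr rfl) hii')

theorem injective_lastRow (h : NonTrivial M) : Injective fun j => M (Fin.last n) j :=
  fun j j' hjj' => congrArg Prod.snd (h.1 (_, j) (_, j') (Or.inl rfl) (Or.inl rfl) hjj')

theorem mem_lastColValues_union_lastRowValues (h : NonTrivial M) (i j : Fin (n + 1)) :
    M i j ∈ lastColValues M ∪ lastRowValues M := by
  obtain ⟨⟨i', j'⟩, hborder | hborder, hval⟩ := h.2 i j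
  · exact mem_union_right _ (mem_image.mpr ⟨j', mem_univ _, by rw [← hval, ← hborder]⟩)
  · exact mem_union_left _ (mem_image.mpr ⟨i', mem_univ _, by rw [← hval, ← hborder]⟩)

theorem lastColValues_inter_lastRowValues (h : NonTrivial M) :
    lastColValues M ∩ lastRowValues M = {M (Fin.last n) (Fin.last n)} := by
  ext v
  simp only [lastColValues, lastRowValues, mem_inter, mem_image, mem_univ, true_and,
    mem_singleton]
  constructor
  · rintro ⟨⟨i, rfl⟩, ⟨j, hj⟩⟩
    rw [show i = Fin.last n from
      congrArg Prod.fst (h.1 (i, _) (_, j) (Or.inr rfl) (Or.inl rfl) hj.symm)]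
  · rintro rfl
    exact ⟨⟨_, rfl⟩, ⟨_, rfl⟩⟩

theorem card_cellsValuedIn_lastCol_add_lastRow (h : NonTrivial M) :
    #(cellsValuedIn M (lastColValues M)) + #(cellsValuedIn M (lastRowValues M)) =
      (n + 1) ^ 2 + freq M (M (Fin.last n) (Fin.last n)) := by
  have hunion : cellsValuedIn M (lastColValues M) ∪ cellsValuedIn M (lastRowValues M) = univ := by
    rw [cellsValuedIn, cellsValuedIn, ← filter_or, filter_true_of_mem]
    exact fun p _ => mem_union.mp (h.mem_lastColValues_union_lastRowValues p.1 p.2)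
  have hinter : cellsValuedIn M (lastColValues M) ∩ cellsValuedIn M (lastRowValues M) =
      univ.filter fun p => M p.1 p.2 = M (Fin.last n) (Fin.last n) := by
    rw [cellsValuedIn, cellsValuedIn, ← filter_and]
    refine filter_congr fun p _ => ?_
    rw [← mem_inter, h.lastColValues_inter_lastRowValues, mem_singleton]
  rw [← card_union_add_card_inter, hunion, hinter, card_univ, Fintype.card_prod,
    Fintype.card_fin, sq, freq]

end NonTrivial

theorem IsSD.two_mul_sum_eq (hsd : IsSD M) (hnt : NonTrivial M) :
    2 * ∑ i, ∑ j, M i j = ((n : ℤ) + 1) ^ 2 + ∑ j, M (Fin.last n) j := by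
  have hrows : ∑ i, ∑ j, M i j = #(cellsValuedIn M (lastColValues M)) := by
    rw [sum_congr rfl fun i _ => hsd.1 i, ← Nat.cast_sum,
      sum_freq_eq_card_cellsValuedIn M hnt.injective_lastCol, lastColValues]
  have hcols : ∑ i, ∑ j, M i j = #(cellsValuedIn M (lastRowValues M)) := by
    refine Finset.sum_comm.trans ?_
    rw [sum_congr rfl fun j _ => hsd.2 j, ← Nat.cast_sum,
      sum_freq_eq_card_cellsValuedIn M hnt.injective_lastRow, lastRowValues]
  have hcount := congrArg (Nat.cast : ℕ → ℤ) hnt.card_cellsValuedIn_lastCol_add_lastRow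
  push_cast at hcount
  rw [hsd.1 (Fin.last n)]
  linear_combination hrows + hcols + hcount

end

/-- In a non-trivial self-descriptive square of order `n+1`, the bottom-row sum
has the same parity as the order `n+1`. -/
theorem stmt1 {n : ℕ} (M : Matrix (Fin (n + 1)) (Fin (n + 1)) ℤ)
    (hsd : IsSD M) (hnt : NonTrivial M) :
    (∑ j, M (Fin.last n) j) ≡ ((n : ℤ) + 1) [ZMOD 2] := by
  have htotal := hsd.two_mul_sum_eq hnt
  obtain ⟨k, hk⟩ := Int.even_mul_succ_self ((n : ℤ) + 1)
  refine Int.modEq_iff_dvd.mpr ⟨k - ∑ i, ∑ j, M i j, ?_⟩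
  linear_combination hk + htotal
end

section
/- In every self-descriptive square M of order 2, the top-right entry equals the bottom-left entry, i.e. M 1 2 = M 2 1. Consequently there exists no non-trivial self-descriptive square of order 2. -/
/-- In any self-descriptive square of order 2 the top-right entry equals the bottom-left
entry; consequently no self-descriptive square of order 2 is non-trivial. -/
theorem stmt3 :
    (∀ M : Matrix (Fin 2) (Fin 2) ℤ, IsSD M → M 0 1 = M 1 0) ∧
    (∀ M : Matrix (Fin 2) (Fin 2) ℤ, IsSD M → ¬ NonTrivial M) := by
  have key : ∀ M : Matrix (Fin 2) (Fin 2) ℤ, IsSD M → M 0 1 = M 1 0 := by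
    intro M h
    have h1 := h.1 1
    have h2 := h.2 1
    have e : (Fin.last 1 : Fin 2) = 1 := rfl
    rw [Fin.sum_univ_two] at h1 h2
    rw [e] at h1 h2
    linarith
  refine ⟨key, fun M h hnt => ?_⟩
  have := hnt.1 (0, 1) (1, 0) (Or.inr rfl) (Or.inl rfl) (key M h)
  simp [Prod.ext_iff] at this
end

section
/- Let M be a non-trivial self-descriptive square of order 3. Then the sum Σr_3 of the entries of the bottom row is either 1 or 3. -/
/-- In a non-trivial self-descriptive square of order 3, the bottom-row sum is 1 or 3. -/
theorem stmt4 (M : Matrix (Fin 3) (Fin 3) ℤ) (hsd : IsSD M) (hnt : NonTrivial M) :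
    (∑ j, M 2 j) = 1 ∨ (∑ j, M 2 j) = 3 := by
  obtain ⟨hrow, hcol⟩ := hsd
  obtain ⟨hinj, hcov⟩ := hnt
  have hlast : (Fin.last 2) = (2 : Fin 3) := rfl
  have hne : ∀ p q : Fin 3 × Fin 3, InBorder p → InBorder q → p ≠ q →
      M p.1 p.2 ≠ M q.1 q.2 := fun p q hp hq hpq h => hpq (hinj p q hp hq h)
  have hB : ∀ p : Fin 3 × Fin 3, p.1 = 2 ∨ p.2 = 2 → InBorder p := by
    intro p hp; simpa [InBorder, hlast] using hp
  -- pairwise distinctness of the five border values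
  have d1 : M 0 2 ≠ M 1 2 := hne (0,2) (1,2) (hB _ (by simp)) (hB _ (by simp)) (by decide)
  have d2 : M 0 2 ≠ M 2 2 := hne (0,2) (2,2) (hB _ (by simp)) (hB _ (by simp)) (by decide)
  have d3 : M 0 2 ≠ M 2 0 := hne (0,2) (2,0) (hB _ (by simp)) (hB _ (by simp)) (by decide)
  have d4 : M 0 2 ≠ M 2 1 := hne (0,2) (2,1) (hB _ (by simp)) (hB _ (by simp)) (by decide)
  have d5 : M 1 2 ≠ M 2 2 := hne (1,2) (2,2) (hB _ (by simp)) (hB _ (by simp)) (by decide)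
  have d6 : M 1 2 ≠ M 2 0 := hne (1,2) (2,0) (hB _ (by simp)) (hB _ (by simp)) (by decide)
  have d7 : M 1 2 ≠ M 2 1 := hne (1,2) (2,1) (hB _ (by simp)) (hB _ (by simp)) (by decide)
  have d8 : M 2 2 ≠ M 2 0 := hne (2,2) (2,0) (hB _ (by simp)) (hB _ (by simp)) (by decide)
  have d9 : M 2 2 ≠ M 2 1 := hne (2,2) (2,1) (hB _ (by simp)) (hB _ (by simp)) (by decide)
  have d10 : M 2 0 ≠ M 2 1 := hne (2,0) (2,1) (hB _ (by simp)) (hB _ (by simp)) (by decide)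
  -- every value is one of the five border values
  have hV : ∀ p : Fin 3 × Fin 3,
      M p.1 p.2 ∈ ({M 0 2, M 1 2, M 2 2, M 2 0, M 2 1} : Finset ℤ) := by
    intro p
    obtain ⟨q, hq, hqv⟩ := hcov p.1 p.2
    rw [← hqv]
    have hq' : q.1 = 2 ∨ q.2 = 2 := by simpa [InBorder, hlast] using hq
    fin_cases q <;>
      simp only [Finset.mem_insert, Finset.mem_singleton] <;>
      first | (exact absurd hq' (by decide)) | tauto
  -- sum of the five frequencies is 9
  have key : freq M (M 0 2) + freq M (M 1 2) + freq M (M 2 2)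
      + freq M (M 2 0) + freq M (M 2 1) = 9 := by
    have h : (Finset.univ : Finset (Fin 3 × Fin 3)).card
        = ∑ v ∈ ({M 0 2, M 1 2, M 2 2, M 2 0, M 2 1} : Finset ℤ), freq M v :=
      Finset.card_eq_sum_card_fiberwise (fun p _ => hV p)
    rw [Finset.sum_insert (by simp [d1, d2, d3, d4]),
        Finset.sum_insert (by simp [d5, d6, d7]),
        Finset.sum_insert (by simp [d8, d9]),
        Finset.sum_insert (by simp [d10]),
        Finset.sum_singleton] at h
    simp only [Finset.card_univ, Fintype.card_prod, Fintype.card_fin] at h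
    omega
  -- row sums
  have h0 : M 0 0 + M 0 1 + M 0 2 = (freq M (M 0 2) : ℤ) := by
    simpa [Fin.sum_univ_three, hlast] using hrow 0
  have h1 : M 1 0 + M 1 1 + M 1 2 = (freq M (M 1 2) : ℤ) := by
    simpa [Fin.sum_univ_three, hlast] using hrow 1
  have h2 : M 2 0 + M 2 1 + M 2 2 = (freq M (M 2 2) : ℤ) := by
    simpa [Fin.sum_univ_three, hlast] using hrow 2
  have c0 : M 0 0 + M 1 0 + M 2 0 = (freq M (M 2 0) : ℤ) := by
    simpa [Fin.sum_univ_three, hlast] using hcol 0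
  have c1 : M 0 1 + M 1 1 + M 2 1 = (freq M (M 2 1) : ℤ) := by
    simpa [Fin.sum_univ_three, hlast] using hcol 1
  have c2 : M 0 2 + M 1 2 + M 2 2 = (freq M (M 2 2) : ℤ) := by
    simpa [Fin.sum_univ_three, hlast] using hcol 2
  -- positivity of frequencies
  have posA : 0 < freq M (M 0 2) :=
    Finset.card_pos.2 ⟨(0,2), by simp⟩
  have posB : 0 < freq M (M 1 2) :=
    Finset.card_pos.2 ⟨(1,2), by simp⟩
  have posC : 0 < freq M (M 2 2) :=
    Finset.card_pos.2 ⟨(2,2), by simp⟩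
  have posD : 0 < freq M (M 2 0) :=
    Finset.card_pos.2 ⟨(2,0), by simp⟩
  have posE : 0 < freq M (M 2 1) :=
    Finset.card_pos.2 ⟨(2,1), by simp⟩
  -- rule out freq c = 5
  have hC5 : freq M (M 2 2) ≠ 5 := by
    intro h5
    have hA1 : freq M (M 0 2) = 1 := by omega
    have hB1 : freq M (M 1 2) = 1 := by omega
    have hsub : (Finset.univ.filter fun p : Fin 3 × Fin 3 => M p.1 p.2 = M 2 2)
        ⊆ ({(0,0),(0,1),(1,0),(1,1),(2,2)} : Finset (Fin 3 × Fin 3)) := by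
      intro p hp
      simp only [Finset.mem_filter, Finset.mem_univ, true_and] at hp
      fin_cases p <;>
        simp only [Finset.mem_insert, Finset.mem_singleton] <;>
        first
          | decide
          | exact absurd hp d2
          | exact absurd hp d5
          | exact absurd hp.symm d8
          | exact absurd hp.symm d9
    have hSeq : (Finset.univ.filter fun p : Fin 3 × Fin 3 => M p.1 p.2 = M 2 2)
        = ({(0,0),(0,1),(1,0),(1,1),(2,2)} : Finset (Fin 3 × Fin 3)) := by
      apply Finset.eq_of_subset_of_card_le hsub
      have : (Finset.univ.filter fun p : Fin 3 × Fin 3 => M p.1 p.2 = M 2 2).card = 5 := by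
        simpa [freq] using h5
      rw [this]
      decide
    have h00 : M 0 0 = M 2 2 := by
      have : ((0,0) : Fin 3 × Fin 3) ∈
          (Finset.univ.filter fun p : Fin 3 × Fin 3 => M p.1 p.2 = M 2 2) := by
        rw [hSeq]; decide
      simpa using this
    have h01 : M 0 1 = M 2 2 := by
      have : ((0,1) : Fin 3 × Fin 3) ∈
          (Finset.univ.filter fun p : Fin 3 × Fin 3 => M p.1 p.2 = M 2 2) := by
        rw [hSeq]; decide
      simpa using this
    have h10 : M 1 0 = M 2 2 := by
      have : ((1,0) : Fin 3 × Fin 3) ∈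
          (Finset.univ.filter fun p : Fin 3 × Fin 3 => M p.1 p.2 = M 2 2) := by
        rw [hSeq]; decide
      simpa using this
    have h11 : M 1 1 = M 2 2 := by
      have : ((1,1) : Fin 3 × Fin 3) ∈
          (Finset.univ.filter fun p : Fin 3 × Fin 3 => M p.1 p.2 = M 2 2) := by
        rw [hSeq]; decide
      simpa using this
    have heq : M 0 2 = M 1 2 := by
      rw [hA1] at h0; rw [hB1] at h1
      omega
    exact d1 heq
  -- conclude
  have hgoal : ∑ j, M 2 j = (freq M (M 2 2) : ℤ) := by
    simpa [Fin.sum_univ_three, hlast] using hrow 2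
  rw [hgoal]
  -- total sum counted two ways gives A + B = D + E
  omega
end

section
/- Let M be a self-descriptive square of order n, let σ be a permutation of {1, …, n−1} applied to the first n−1 rows of M, and let τ be a permutation of {1, …, n−1} applied to the first n−1 columns of M (the last row and last column staying in place). Then the resulting matrix is again a self-descriptive square, and it is non-trivial whenever M is non-trivial. -/
/-- Extend a permutation of `Fin n` to a function on `Fin (n+1)` fixing the last index. -/
def extendPerm {n : ℕ} (σ : Equiv.Perm (Fin n)) : Fin (n + 1) → Fin (n + 1) :=
  Fin.lastCases (Fin.last n) (fun i => (σ i).castSucc)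

lemma extendPerm_last {n : ℕ} (σ : Equiv.Perm (Fin n)) :
    extendPerm σ (Fin.last n) = Fin.last n := by simp [extendPerm]

lemma extendPerm_castSucc {n : ℕ} (σ : Equiv.Perm (Fin n)) (i : Fin n) :
    extendPerm σ i.castSucc = (σ i).castSucc := by simp [extendPerm]

lemma extendPerm_inv_comp {n : ℕ} (σ : Equiv.Perm (Fin n)) (i : Fin (n + 1)) :
    extendPerm σ⁻¹ (extendPerm σ i) = i := by
  induction i using Fin.lastCases with
  | last => simp [extendPerm_last]
  | cast i => simp [extendPerm_castSucc]

lemma extendPerm_comp_inv {n : ℕ} (σ : Equiv.Perm (Fin n)) (i : Fin (n + 1)) :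
    extendPerm σ (extendPerm σ⁻¹ i) = i := by
  simpa using extendPerm_inv_comp σ⁻¹ i

/-- `extendPerm` as an equivalence. -/
def extendEquiv {n : ℕ} (σ : Equiv.Perm (Fin n)) : Equiv.Perm (Fin (n + 1)) :=
  ⟨extendPerm σ, extendPerm σ⁻¹, fun i => extendPerm_inv_comp σ i, fun i => by
    simpa using extendPerm_inv_comp σ⁻¹ i⟩

lemma extendPerm_eq_last_iff {n : ℕ} (σ : Equiv.Perm (Fin n)) (x : Fin (n + 1)) :
    extendPerm σ x = Fin.last n ↔ x = Fin.last n := by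
  constructor
  · intro h
    have := (extendEquiv σ).injective (a₁ := x) (a₂ := Fin.last n)
    exact this (by simpa [extendEquiv, extendPerm_last] using h)
  · rintro rfl; exact extendPerm_last σ

lemma freq_perm {n : ℕ} (M : Matrix (Fin (n + 1)) (Fin (n + 1)) ℤ)
    (σ τ : Equiv.Perm (Fin n)) (v : ℤ) :
    freq (fun i j => M (extendPerm σ i) (extendPerm τ j)) v = freq M v := by
  unfold freq
  rw [← Finset.card_map ((extendEquiv σ).prodCongr (extendEquiv τ)).toEmbedding]
  congr 1
  ext p
  simp only [Finset.mem_map, Finset.mem_filter, Finset.mem_univ, true_and,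
    Equiv.coe_toEmbedding, Equiv.prodCongr_apply, Prod.exists, Prod.map]
  constructor
  · rintro ⟨a, b, h, rfl⟩
    exact h
  · intro h
    refine ⟨(extendEquiv σ).symm p.1, (extendEquiv τ).symm p.2, ?_, ?_⟩
    · simpa [extendEquiv, extendPerm_comp_inv] using h
    · simp [extendEquiv, extendPerm_comp_inv]

/-- Permuting the first `n` rows and the first `n` columns of a self-descriptive square
of order `n+1` (keeping the last row and column in place) yields a self-descriptive
square, which is non-trivial whenever the original is. -/
theorem stmt6 {n : ℕ} (M : Matrix (Fin (n + 1)) (Fin (n + 1)) ℤ)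
    (σ τ : Equiv.Perm (Fin n)) (hsd : IsSD M) :
    IsSD (fun i j => M (extendPerm σ i) (extendPerm τ j)) ∧
    (NonTrivial M → NonTrivial (fun i j => M (extendPerm σ i) (extendPerm τ j))) := by
  obtain ⟨hr, hc⟩ := hsd
  constructor
  · constructor
    · intro i
      have h1 : ∑ j, M (extendPerm σ i) (extendPerm τ j) = ∑ j, M (extendPerm σ i) j :=
        Fintype.sum_equiv (extendEquiv τ) _ _ (fun j => rfl)
      simp only [h1, freq_perm, extendPerm_last]
      exact hr _
    · intro j
      have h1 : ∑ i, M (extendPerm σ i) (extendPerm τ j) = ∑ i, M i (extendPerm τ j) :=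
        Fintype.sum_equiv (extendEquiv σ) _ _ (fun i => rfl)
      simp only [h1, freq_perm, extendPerm_last]
      exact hc _
  · rintro ⟨h1, h2⟩
    constructor
    · intro p q hp hq heq
      have hp' : InBorder (extendPerm σ p.1, extendPerm τ p.2) := by
        rcases hp with h | h
        · exact Or.inl (by rw [h, extendPerm_last])
        · exact Or.inr (by rw [h, extendPerm_last])
      have hq' : InBorder (extendPerm σ q.1, extendPerm τ q.2) := by
        rcases hq with h | h
        · exact Or.inl (by rw [h, extendPerm_last])
        · exact Or.inr (by rw [h, extendPerm_last])
      have := h1 _ _ hp' hq' heq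
      have e1 := congrArg Prod.fst this
      have e2 := congrArg Prod.snd this
      simp only at e1 e2
      exact Prod.ext ((extendEquiv σ).injective e1) ((extendEquiv τ).injective e2)
    · intro i j
      obtain ⟨p, hp, hMp⟩ := h2 (extendPerm σ i) (extendPerm τ j)
      refine ⟨((extendEquiv σ).symm p.1, (extendEquiv τ).symm p.2), ?_, ?_⟩
      · rcases hp with h | h
        · refine Or.inl ?_
          have : (extendEquiv σ).symm (Fin.last n) = Fin.last n := by
            apply (extendEquiv σ).injective
            simp [extendEquiv, extendPerm_last]
          rw [h, this]
        · refine Or.inr ?_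
          have : (extendEquiv τ).symm (Fin.last n) = Fin.last n := by
            apply (extendEquiv τ).injective
            simp [extendEquiv, extendPerm_last]
          rw [h, this]
      · simpa [extendEquiv, extendPerm_comp_inv] using hMp
end

section
/- Let M be a non-trivial self-descriptive square of order n ≥ 2. Among all matrices obtained from M by permuting the first n−1 rows, permuting the first n−1 columns, and optionally transposing, there is exactly one matrix in standard normal form, i.e. exactly one matrix N such that the first n−1 entries of the bottom row of N are strictly increasing from left to right, the first n−1 entries of the rightmost column of N are strictly increasing from top to bottom, and the top-right entry of N is strictly greater than its bottom-left entry. -/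
/-- Apply a permutation `σ` to the first `n` rows, a permutation `τ` to the first `n`
columns (the last row and column staying in place), and optionally (when `t = true`)
transpose the result. -/
def applyT {n : ℕ} (σ τ : Equiv.Perm (Fin n)) (t : Bool)
    (M : Matrix (Fin (n + 1)) (Fin (n + 1)) ℤ) : Matrix (Fin (n + 1)) (Fin (n + 1)) ℤ :=
  if t then (fun i j => M (extendPerm σ j) (extendPerm τ i))
  else (fun i j => M (extendPerm σ i) (extendPerm τ j))

/-- A square of order `n+1` is in standard normal form if the first `n` entries of its
bottom row are strictly increasing, the first `n` entries of its rightmost column are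
strictly increasing, and its top-right entry exceeds its bottom-left entry. -/
def IsSNF {n : ℕ} (M : Matrix (Fin (n + 1)) (Fin (n + 1)) ℤ) : Prop :=
  (∀ i j : Fin n, i < j → M (Fin.last n) i.castSucc < M (Fin.last n) j.castSucc) ∧
  (∀ i j : Fin n, i < j → M i.castSucc (Fin.last n) < M j.castSucc (Fin.last n)) ∧
  M (Fin.last n) 0 < M 0 (Fin.last n)


lemma sort_unique {n : ℕ} {f : Fin n → ℤ} (hf : Function.Injective f)
    {σ : Equiv.Perm (Fin n)} (h : StrictMono (f ∘ σ)) : σ = Tuple.sort f := by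
  have h2 := Tuple.comp_sort_eq_comp_iff_monotone.mpr h.monotone
  exact Equiv.ext fun i => hf (congrFun h2 i)

/-- Among all matrices obtained from a non-trivial self-descriptive square of order
`n+1 ≥ 2` by permuting the first `n` rows, permuting the first `n` columns and
optionally transposing, exactly one is in standard normal form. -/
theorem stmt9 {n : ℕ} (hn : 1 ≤ n) (M : Matrix (Fin (n + 1)) (Fin (n + 1)) ℤ)
    (hsd : IsSD M) (hnt : NonTrivial M) :
    ∃! N : Matrix (Fin (n + 1)) (Fin (n + 1)) ℤ,
      (∃ (σ τ : Equiv.Perm (Fin n)) (t : Bool), N = applyT σ τ t M) ∧ IsSNF N := by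
  haveI : NeZero n := ⟨by omega⟩
  set f : Fin n → ℤ := fun j => M (Fin.last n) j.castSucc with hfdef
  set g : Fin n → ℤ := fun i => M i.castSucc (Fin.last n) with hgdef
  have hf : Function.Injective f := by
    intro a b h
    have := hnt.1 (Fin.last n, a.castSucc) (Fin.last n, b.castSucc)
      (Or.inl rfl) (Or.inl rfl) h
    have := congrArg Prod.snd this
    exact Fin.castSucc_injective n this
  have hg : Function.Injective g := by
    intro a b h
    have := hnt.1 (a.castSucc, Fin.last n) (b.castSucc, Fin.last n)
      (Or.inr rfl) (Or.inr rfl) h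
    have := congrArg Prod.fst this
    exact Fin.castSucc_injective n this
  set τ₀ := Tuple.sort f with hτ₀
  set σ₀ := Tuple.sort g with hσ₀
  have hfm : StrictMono (f ∘ τ₀) :=
    (Tuple.monotone_sort f).strictMono_of_injective (hf.comp τ₀.injective)
  have hgm : StrictMono (g ∘ σ₀) :=
    (Tuple.monotone_sort g).strictMono_of_injective (hg.comp σ₀.injective)
  set a : ℤ := f (τ₀ 0) with hadef
  set b : ℤ := g (σ₀ 0) with hbdef
  have hab : a ≠ b := by
    intro h
    have := hnt.1 (Fin.last n, (τ₀ 0).castSucc) ((σ₀ 0).castSucc, Fin.last n)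
      (Or.inl rfl) (Or.inr rfl) h
    have h1 := congrArg Prod.fst this
    exact (Fin.castSucc_lt_last (σ₀ 0)).ne' h1
  -- entry computations
  have e1 : ∀ (σ τ : Equiv.Perm (Fin n)) (j : Fin n),
      applyT σ τ false M (Fin.last n) j.castSucc = f (τ j) := by
    intro σ τ j
    simp [applyT, extendPerm_last, extendPerm_castSucc, hfdef]
  have e2 : ∀ (σ τ : Equiv.Perm (Fin n)) (i : Fin n),
      applyT σ τ false M i.castSucc (Fin.last n) = g (σ i) := by
    intro σ τ i
    simp [applyT, extendPerm_last, extendPerm_castSucc, hgdef]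
  have e3 : ∀ (σ τ : Equiv.Perm (Fin n)) (j : Fin n),
      applyT σ τ true M (Fin.last n) j.castSucc = g (σ j) := by
    intro σ τ j
    simp [applyT, extendPerm_last, extendPerm_castSucc, hgdef]
  have e4 : ∀ (σ τ : Equiv.Perm (Fin n)) (i : Fin n),
      applyT σ τ true M i.castSucc (Fin.last n) = f (τ i) := by
    intro σ τ i
    simp [applyT, extendPerm_last, extendPerm_castSucc, hfdef]
  have hz : (0 : Fin (n + 1)) = (0 : Fin n).castSucc := by
    simp
  -- the SNF conditions for applyT σ τ t M
  have hsnf_false : ∀ (σ τ : Equiv.Perm (Fin n)),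
      IsSNF (applyT σ τ false M) ↔
        StrictMono (f ∘ τ) ∧ StrictMono (g ∘ σ) ∧ f (τ 0) < g (σ 0) := by
    intro σ τ
    constructor
    · rintro ⟨h1, h2, h3⟩
      refine ⟨fun i j hij => by simpa [e1] using h1 i j hij,
        fun i j hij => by simpa [e2] using h2 i j hij, ?_⟩
      rw [hz] at h3
      rwa [e1, e2] at h3
    · rintro ⟨h1, h2, h3⟩
      refine ⟨fun i j hij => by simpa [e1] using h1 hij,
        fun i j hij => by simpa [e2] using h2 hij, ?_⟩
      rw [hz, e1, e2]
      exact h3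
  have hsnf_true : ∀ (σ τ : Equiv.Perm (Fin n)),
      IsSNF (applyT σ τ true M) ↔
        StrictMono (g ∘ σ) ∧ StrictMono (f ∘ τ) ∧ g (σ 0) < f (τ 0) := by
    intro σ τ
    constructor
    · rintro ⟨h1, h2, h3⟩
      refine ⟨fun i j hij => by simpa [e3] using h1 i j hij,
        fun i j hij => by simpa [e4] using h2 i j hij, ?_⟩
      rw [hz] at h3
      rwa [e3, e4] at h3
    · rintro ⟨h1, h2, h3⟩
      refine ⟨fun i j hij => by simpa [e3] using h1 hij,
        fun i j hij => by simpa [e4] using h2 hij, ?_⟩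
      rw [hz, e3, e4]
      exact h3
  rcases lt_or_gt_of_ne hab with hlt | hgt
  · refine ⟨applyT σ₀ τ₀ false M, ⟨⟨σ₀, τ₀, false, rfl⟩,
      (hsnf_false σ₀ τ₀).mpr ⟨hfm, hgm, hlt⟩⟩, ?_⟩
    rintro N ⟨⟨σ, τ, t, rfl⟩, hN⟩
    cases t with
    | false =>
      obtain ⟨h1, h2, _⟩ := (hsnf_false σ τ).mp hN
      rw [sort_unique hf h1, sort_unique hg h2]
    | true =>
      obtain ⟨h1, h2, h3⟩ := (hsnf_true σ τ).mp hN
      rw [sort_unique hg h1, sort_unique hf h2] at h3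
      exact absurd h3 (by rw [← hτ₀, ← hσ₀]; exact not_lt.mpr hlt.le)
  · refine ⟨applyT σ₀ τ₀ true M, ⟨⟨σ₀, τ₀, true, rfl⟩,
      (hsnf_true σ₀ τ₀).mpr ⟨hgm, hfm, hgt⟩⟩, ?_⟩
    rintro N ⟨⟨σ, τ, t, rfl⟩, hN⟩
    cases t with
    | true =>
      obtain ⟨h1, h2, _⟩ := (hsnf_true σ τ).mp hN
      rw [sort_unique hg h1, sort_unique hf h2]
    | false =>
      obtain ⟨h1, h2, h3⟩ := (hsnf_false σ τ).mp hN
      rw [sort_unique hf h1, sort_unique hg h2] at h3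
      exact absurd h3 (by rw [← hτ₀, ← hσ₀]; exact not_lt.mpr hgt.le)
end

section
/- Let M be a non-trivial minimal self-descriptive square of order n, i.e. a non-trivial s-d square whose set of entry values is exactly {1−n, 2−n, …, −1, 0, 1, …, n−1}. Then the bottom-right corner entry k = M n n is a positive even integer and the frequency of k in M equals k/2. -/
lemma sum_icc_zero (n : ℕ) : ∑ v ∈ Finset.Icc (-(n:ℤ)) (n:ℤ), v = 0 := by
  induction n with
  | zero => simp
  | succ m ih =>
    have hset : Finset.Icc (-(m+1:ℤ)) (m+1:ℤ)
        = insert (-(m+1:ℤ)) (insert ((m+1:ℤ)) (Finset.Icc (-(m:ℤ)) (m:ℤ))) := by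
      ext v
      simp only [Finset.mem_Icc, Finset.mem_insert]
      omega
    have h1 : ((m+1:ℤ)) ∉ Finset.Icc (-(m:ℤ)) (m:ℤ) := by
      simp only [Finset.mem_Icc]; omega
    have h2 : (-(m+1:ℤ)) ∉ insert ((m+1:ℤ)) (Finset.Icc (-(m:ℤ)) (m:ℤ)) := by
      simp only [Finset.mem_Icc, Finset.mem_insert]; omega
    push_cast
    rw [hset, Finset.sum_insert h2, Finset.sum_insert h1, ih]
    ring

/-- In a non-trivial minimal self-descriptive square of order `n+1` (one whose set of
entry values is exactly the integers from `-n` to `n`), the bottom-right corner entry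
`k` is positive and even, and its frequency equals `k / 2`. -/
theorem stmt10 {n : ℕ} (M : Matrix (Fin (n + 1)) (Fin (n + 1)) ℤ)
    (hsd : IsSD M) (hnt : NonTrivial M)
    (hmin : {v : ℤ | ∃ i j, M i j = v} = Set.Icc (-(n : ℤ)) (n : ℤ)) :
    0 < M (Fin.last n) (Fin.last n) ∧ Even (M (Fin.last n) (Fin.last n)) ∧
      2 * (freq M (M (Fin.last n) (Fin.last n)) : ℤ) = M (Fin.last n) (Fin.last n) := by
  obtain ⟨hrow, hcol⟩ := hsd
  obtain ⟨hinj, -⟩ := hnt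
  set k := M (Fin.last n) (Fin.last n) with hk
  -- the border as a finset
  set R : Finset (Fin (n+1) × Fin (n+1)) := ({Fin.last n} ×ˢ Finset.univ) with hR
  set C : Finset (Fin (n+1) × Fin (n+1)) := (Finset.univ ×ˢ {Fin.last n}) with hC
  set B : Finset (Fin (n+1) × Fin (n+1)) := R ∪ C with hB
  have hBmem : ∀ p : Fin (n+1) × Fin (n+1), p ∈ B ↔ InBorder p := by
    intro p
    simp only [hB, hR, hC, InBorder, Finset.mem_union, Finset.mem_product,
      Finset.mem_singleton, Finset.mem_univ, and_true, true_and]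
  have hRC : R ∩ C = {(Fin.last n, Fin.last n)} := by
    ext p
    simp only [hR, hC, Finset.mem_inter, Finset.mem_product, Finset.mem_singleton,
      Finset.mem_univ, and_true, true_and, Prod.ext_iff]
  have hcardR : R.card = n + 1 := by rw [hR]; simp
  have hcardC : C.card = n + 1 := by rw [hC]; simp
  have hcardB : B.card = 2 * n + 1 := by
    have h := Finset.card_union_add_card_inter R C
    rw [hRC, hcardR, hcardC, Finset.card_singleton] at h
    rw [hB]
    omega
  -- sums over the two border parts
  have hsumR : ∑ p ∈ R, M p.1 p.2 = (freq M k : ℤ) := by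
    rw [hR, Finset.sum_product, Finset.sum_singleton]
    exact hrow (Fin.last n)
  have hsumC : ∑ p ∈ C, M p.1 p.2 = (freq M k : ℤ) := by
    rw [hC, Finset.sum_product_right, Finset.sum_singleton]
    exact hcol (Fin.last n)
  have hsumB : ∑ p ∈ B, M p.1 p.2 + k = 2 * (freq M k : ℤ) := by
    have h := Finset.sum_union_inter (s₁ := R) (s₂ := C)
      (f := fun p : Fin (n+1) × Fin (n+1) => M p.1 p.2)
    rw [hRC, Finset.sum_singleton, hsumR, hsumC] at h
    rw [hB]
    linarith [h]
  -- border values are exactly Icc (-n) n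
  have hinjB : ∀ p ∈ B, ∀ q ∈ B, M p.1 p.2 = M q.1 q.2 → p = q := by
    intro p hp q hq h
    exact hinj p q ((hBmem p).1 hp) ((hBmem q).1 hq) h
  set I : Finset ℤ := B.image (fun p => M p.1 p.2) with hI
  have hcardI : I.card = 2 * n + 1 := by
    rw [hI, Finset.card_image_of_injOn, hcardB]
    intro p hp q hq h
    exact hinjB p hp q hq h
  have hsub : I ⊆ Finset.Icc (-(n:ℤ)) (n:ℤ) := by
    intro v hv
    rw [hI, Finset.mem_image] at hv
    obtain ⟨p, -, rfl⟩ := hv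
    have : M p.1 p.2 ∈ {v : ℤ | ∃ i j, M i j = v} := ⟨p.1, p.2, rfl⟩
    rw [hmin, Set.mem_Icc] at this
    rw [Finset.mem_Icc]
    exact this
  have hIccCard : (Finset.Icc (-(n:ℤ)) (n:ℤ)).card = 2 * n + 1 := by
    rw [Int.card_Icc]
    omega
  have hIeq : I = Finset.Icc (-(n:ℤ)) (n:ℤ) :=
    Finset.eq_of_subset_of_card_le hsub (by omega)
  have hsum0 : ∑ p ∈ B, M p.1 p.2 = 0 := by
    have himg : ∑ v ∈ I, v = ∑ p ∈ B, M p.1 p.2 := by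
      rw [hI]
      exact Finset.sum_image (f := fun v : ℤ => v) hinjB
    rw [← himg, hIeq, sum_icc_zero]
  have hkey : 2 * (freq M k : ℤ) = k := by
    rw [← hsumB, hsum0, zero_add]
  have hfreq1 : 1 ≤ freq M k := by
    have : (Fin.last n, Fin.last n) ∈
        (Finset.univ.filter fun p : Fin (n+1) × Fin (n+1) => M p.1 p.2 = k) := by
      simp [hk]
    exact Finset.card_pos.2 ⟨_, this⟩
  refine ⟨by omega, ⟨(freq M k : ℤ), by omega⟩, hkey⟩
end
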